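/- arXiv:2209.01950 — 2 statements merged into one kernel-verified Lean document; each statement's English description precedes it below -/
import Mathlib

section
/- Let α > 1/4, ξ ∈ ℝ and k ∈ ℤ with k ≠ 0, and define ℓ(t) = k(ξ−kt)/(k²+(ξ−kt)²) and p(t) = k/(k²+(ξ−kt)²)^{1/2}. Then there exist constants 0 < c ≤ C < ∞, depending only on α (in particular independent of k and ξ), such that every continuously differentiable solution (Z,Q) : ℝ → ℂ² of the system Z′(t) = (1/2)ℓ(t)Z(t) − √α·p(t)·Q(t), Q′(t) = √α·p(t)·Z(t) − (1/2)ℓ(t)Q(t) satisfies c·(|Z(s)|² + |Q(s)|²) ≤ |Z(t)|² + |Q(t)|² ≤ C·(|Z(s)|² + |Q(s)|²) for all s, t ∈ ℝ. -/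
/-!
Write `a = √α > 1/2`. Besides the energy `E = ‖Z‖² + ‖Q‖²` the system has the cross term
`r = ⟪Z, Q⟫`, and `ℓ = a p γ` with `γ = (ξ - kt) / (a √(k² + (ξ - kt)²))`. Hence the modified energy
`Φ = E - γ r` satisfies `Φ' = -γ' r`: the large coefficients cancel and only `γ'` is left.
Since `|γ| ≤ 1/a < 2` and `2|r| ≤ E`, `Φ` is comparable to `E`, and `|Φ'| ≤ |γ'| Φ / (2 - 1/a)`.
As `γ` is monotone, `∫ |γ'| ≤ 2/a`, so Grönwall's inequality bounds `Φ(t) / Φ(s)` uniformly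
in `k`, `ξ`, `s`, `t`.
-/

open Real Set
open scoped RealInnerProductSpace

noncomputable section

/-- Fourier symbol `ℓ(t) = k(ξ−kt)/(k²+(ξ−kt)²)`. -/
def ell (ξ : ℝ) (k : ℤ) (t : ℝ) : ℝ :=
  ((k : ℝ) * (ξ - k * t)) / ((k : ℝ) ^ 2 + (ξ - k * t) ^ 2)

/-- Fourier symbol `p(t) = k/(k²+(ξ−kt)²)^{1/2}`. -/
def pp (ξ : ℝ) (k : ℤ) (t : ℝ) : ℝ :=
  (k : ℝ) / Real.sqrt ((k : ℝ) ^ 2 + (ξ - k * t) ^ 2)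

section Gronwall

variable {Φ φ G g : ℝ → ℝ}

theorem antitone_mul_exp_neg_of_deriv_le (hΦ : ∀ u, HasDerivAt Φ (φ u) u)
    (hG : ∀ u, HasDerivAt G (g u) u) (hφ : ∀ u, φ u ≤ g u * Φ u) :
    Antitone fun u => Φ u * exp (-G u) := by
  have hd : ∀ u, HasDerivAt (fun u => Φ u * exp (-G u)) ((φ u - g u * Φ u) * exp (-G u)) u :=
    fun u => ((hΦ u).mul (hG u).neg.exp).congr_deriv (by rw [Pi.neg_apply]; ring)
  refine antitone_of_deriv_nonpos (fun u => (hd u).differentiableAt) fun u => ?_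
  rw [(hd u).deriv]
  exact mul_nonpos_of_nonpos_of_nonneg (by linarith [hφ u]) (exp_pos _).le

theorem monotone_mul_exp_of_neg_deriv_le (hΦ : ∀ u, HasDerivAt Φ (φ u) u)
    (hG : ∀ u, HasDerivAt G (g u) u) (hφ : ∀ u, -φ u ≤ g u * Φ u) :
    Monotone fun u => Φ u * exp (G u) := by
  have hd : ∀ u, HasDerivAt (fun u => Φ u * exp (G u)) ((φ u + g u * Φ u) * exp (G u)) u :=
    fun u => ((hΦ u).mul (hG u).exp).congr_deriv (by ring)
  refine monotone_of_deriv_nonneg (fun u => (hd u).differentiableAt) fun u => ?_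
  rw [(hd u).deriv]
  exact mul_nonneg (by linarith [hφ u]) (exp_pos _).le

theorem le_exp_sub_mul_of_mul_exp_le {x y Φs Φt : ℝ} (h : Φt * exp x ≤ Φs * exp y) :
    Φt ≤ exp (y - x) * Φs := by
  rw [exp_sub, div_mul_eq_mul_div, le_div_iff₀ (exp_pos x)]
  linarith

theorem le_exp_abs_sub_mul_of_abs_deriv_le (hΦ : ∀ u, HasDerivAt Φ (φ u) u)
    (hG : ∀ u, HasDerivAt G (g u) u) (hφ : ∀ u, |φ u| ≤ g u * Φ u) (hΦ₀ : ∀ u, 0 ≤ Φ u)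
    (s t : ℝ) : Φ t ≤ exp |G t - G s| * Φ s := by
  rcases le_total s t with hst | hts
  · have h := le_exp_sub_mul_of_mul_exp_le
      (antitone_mul_exp_neg_of_deriv_le hΦ hG (fun u => (le_abs_self _).trans (hφ u)) hst)
    refine h.trans (mul_le_mul_of_nonneg_right (exp_le_exp.2 ?_) (hΦ₀ s))
    linarith [le_abs_self (G t - G s)]
  · have h := le_exp_sub_mul_of_mul_exp_le
      (monotone_mul_exp_of_neg_deriv_le hΦ hG (fun u => (neg_le_abs _).trans (hφ u)) hts)
    refine h.trans (mul_le_mul_of_nonneg_right (exp_le_exp.2 ?_) (hΦ₀ s))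
    linarith [neg_abs_le (G t - G s)]

end Gronwall

section ModifiedEnergy

variable {E : Type*} [NormedAddCommGroup E] [InnerProductSpace ℝ E]

theorem two_mul_abs_real_inner_le_norm_sq_add_norm_sq (z q : E) :
    2 * |⟪z, q⟫| ≤ ‖z‖ ^ 2 + ‖q‖ ^ 2 := by
  nlinarith [abs_real_inner_le_norm z q, two_mul_le_add_sq ‖z‖ ‖q‖]

def modifiedEnergy (γ : ℝ → ℝ) (Z Q : ℝ → E) (u : ℝ) : ℝ :=
  ‖Z u‖ ^ 2 + ‖Q u‖ ^ 2 - γ u * ⟪Z u, Q u⟫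

theorem abs_modifiedEnergy_sub_le {γ : ℝ → ℝ} {β : ℝ} (Z Q : ℝ → E) {u : ℝ} (hγ : |γ u| ≤ β) :
    |modifiedEnergy γ Z Q u - (‖Z u‖ ^ 2 + ‖Q u‖ ^ 2)| ≤ β / 2 * (‖Z u‖ ^ 2 + ‖Q u‖ ^ 2) := by
  have hr := two_mul_abs_real_inner_le_norm_sq_add_norm_sq (Z u) (Q u)
  rw [modifiedEnergy, sub_sub_cancel_left, abs_neg, abs_mul]
  nlinarith [abs_nonneg (γ u), abs_nonneg ⟪Z u, Q u⟫]

variable {Z Q : ℝ → E} {ν μ γ γ' : ℝ → ℝ}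

theorem hasDerivAt_modifiedEnergy
    (hZ : ∀ t, HasDerivAt Z (ν t • Z t - μ t • Q t) t)
    (hQ : ∀ t, HasDerivAt Q (μ t • Z t - ν t • Q t) t)
    (hγ : ∀ t, HasDerivAt γ (γ' t) t) (hrel : ∀ t, γ t * μ t = 2 * ν t) (t : ℝ) :
    HasDerivAt (modifiedEnergy γ Z Q) (-γ' t * ⟪Z t, Q t⟫) t := by
  have h := (((hZ t).norm_sq).add (hQ t).norm_sq).sub ((hγ t).mul ((hZ t).inner ℝ (hQ t)))
  refine h.congr_deriv ?_
  simp only [inner_sub_left, inner_sub_right, real_inner_smul_left, real_inner_smul_right,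
    real_inner_self_eq_norm_sq, real_inner_comm (Z t) (Q t)]
  linear_combination (‖Q t‖ ^ 2 - ‖Z t‖ ^ 2) * hrel t

variable {β : ℝ}

/-- Grönwall with rate `|γ'| / (2 - β)`: as `γ'` has constant sign, this rate is the derivative
of `±γ / (2 - β)`, whose oscillation is at most `2β / (2 - β)`. -/
theorem modifiedEnergy_le_exp_mul (hβ : β < 2)
    (hZ : ∀ t, HasDerivAt Z (ν t • Z t - μ t • Q t) t)
    (hQ : ∀ t, HasDerivAt Q (μ t • Z t - ν t • Q t) t)
    (hγ : ∀ t, HasDerivAt γ (γ' t) t) (hrel : ∀ t, γ t * μ t = 2 * ν t)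
    (hbound : ∀ t, |γ t| ≤ β) (hsign : (∀ t, 0 ≤ γ' t) ∨ ∀ t, γ' t ≤ 0) (s t : ℝ) :
    modifiedEnergy γ Z Q t ≤ exp (2 * β / (2 - β)) * modifiedEnergy γ Z Q s := by
  obtain ⟨σ, hσ, hσγ'⟩ : ∃ σ : ℝ, |σ| = 1 ∧ ∀ u, σ * γ' u = |γ' u| := by
    rcases hsign with h | h
    · exact ⟨1, by simp, fun u => by simp [abs_of_nonneg (h u)]⟩
    · exact ⟨-1, by simp, fun u => by simp [abs_of_nonpos (h u)]⟩
  have hβ' : 0 < 2 - β := by linarith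
  have hlower : ∀ u, (2 - β) * (‖Z u‖ ^ 2 + ‖Q u‖ ^ 2) ≤ 2 * modifiedEnergy γ Z Q u :=
    fun u => by linarith [(abs_le.1 (abs_modifiedEnergy_sub_le Z Q (hbound u))).1]
  have hΦ₀ : ∀ u, 0 ≤ modifiedEnergy γ Z Q u := fun u => by
    nlinarith [hlower u, norm_nonneg (Z u), norm_nonneg (Q u)]
  have hG : ∀ u, HasDerivAt (fun v => σ / (2 - β) * γ v) (|γ' u| / (2 - β)) u := fun u =>
    ((hγ u).const_mul (σ / (2 - β))).congr_deriv (by rw [← hσγ' u]; ring)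
  have hrate : ∀ u, |-γ' u * ⟪Z u, Q u⟫| ≤ |γ' u| / (2 - β) * modifiedEnergy γ Z Q u := by
    intro u
    have hr : |⟪Z u, Q u⟫| * (2 - β) ≤ modifiedEnergy γ Z Q u := by
      nlinarith [two_mul_abs_real_inner_le_norm_sq_add_norm_sq (Z u) (Q u), hlower u]
    rw [abs_mul, abs_neg, div_mul_eq_mul_div, le_div_iff₀ hβ', mul_assoc]
    exact mul_le_mul_of_nonneg_left hr (abs_nonneg _)
  refine (le_exp_abs_sub_mul_of_abs_deriv_le (hasDerivAt_modifiedEnergy hZ hQ hγ hrel) hG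
    hrate hΦ₀ s t).trans (mul_le_mul_of_nonneg_right (exp_le_exp.2 ?_) (hΦ₀ s))
  rw [← mul_sub, abs_mul, abs_div, hσ, abs_of_pos hβ', one_div_mul_eq_div]
  gcongr
  linarith [abs_sub (γ t) (γ s), hbound t, hbound s]

def stabilityConstant (β : ℝ) : ℝ :=
  exp (2 * β / (2 - β)) * ((2 + β) / (2 - β))

theorem one_le_stabilityConstant (hβ₀ : 0 ≤ β) (hβ : β < 2) : 1 ≤ stabilityConstant β := by
  have hβ' : 0 < 2 - β := by linarith
  have h₁ : 1 ≤ exp (2 * β / (2 - β)) := one_le_exp (by positivity)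
  have h₂ : 1 ≤ (2 + β) / (2 - β) := by rw [le_div_iff₀ hβ']; linarith
  exact one_le_mul_of_one_le_of_one_le h₁ h₂

theorem norm_sq_add_norm_sq_le_stabilityConstant_mul (hβ : β < 2)
    (hZ : ∀ t, HasDerivAt Z (ν t • Z t - μ t • Q t) t)
    (hQ : ∀ t, HasDerivAt Q (μ t • Z t - ν t • Q t) t)
    (hγ : ∀ t, HasDerivAt γ (γ' t) t) (hrel : ∀ t, γ t * μ t = 2 * ν t)
    (hbound : ∀ t, |γ t| ≤ β) (hsign : (∀ t, 0 ≤ γ' t) ∨ ∀ t, γ' t ≤ 0) (s t : ℝ) :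
    ‖Z t‖ ^ 2 + ‖Q t‖ ^ 2 ≤ stabilityConstant β * (‖Z s‖ ^ 2 + ‖Q s‖ ^ 2) := by
  have hβ' : 0 < 2 - β := by linarith
  have hΦ := modifiedEnergy_le_exp_mul hβ hZ hQ hγ hrel hbound hsign s t
  have ht := abs_le.1 (abs_modifiedEnergy_sub_le Z Q (hbound t))
  have hs := abs_le.1 (abs_modifiedEnergy_sub_le Z Q (hbound s))
  have hexp := exp_pos (2 * β / (2 - β))
  rw [stabilityConstant, mul_assoc, div_mul_eq_mul_div, ← mul_div_assoc, le_div_iff₀ hβ']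
  nlinarith

end ModifiedEnergy

theorem hasDerivAt_div_sqrt_add_sq {c : ℝ} (hc : 0 < c) (x : ℝ) :
    HasDerivAt (fun y => y / √(c + y ^ 2)) (c / ((c + x ^ 2) * √(c + x ^ 2))) x := by
  have hm : 0 < c + x ^ 2 := by positivity
  have hs : HasDerivAt (fun y => √(c + y ^ 2)) (2 * x / (2 * √(c + x ^ 2))) x := by
    simpa using ((hasDerivAt_pow 2 x).const_add c).sqrt hm.ne'
  refine ((hasDerivAt_id' x).div hs (sqrt_pos.2 hm).ne').congr_deriv ?_
  have hsq := sq_sqrt hm.le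
  field_simp
  rw [hsq]
  ring

theorem abs_div_sqrt_add_sq_le_one {c : ℝ} (hc : 0 ≤ c) (x : ℝ) : |x / √(c + x ^ 2)| ≤ 1 := by
  rw [abs_div, abs_of_nonneg (sqrt_nonneg _), ← sqrt_sq_eq_abs]
  exact div_le_one_of_le₀ (sqrt_le_sqrt (by linarith)) (sqrt_nonneg _)

def shearProfile (ξ : ℝ) (k : ℤ) (t : ℝ) : ℝ :=
  (ξ - k * t) / √((k : ℝ) ^ 2 + (ξ - k * t) ^ 2)

section ShearProfile

variable {ξ : ℝ} {k : ℤ}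

theorem shearProfile_mul_pp (t : ℝ) : shearProfile ξ k t * pp ξ k t = ell ξ k t := by
  have hsq := sq_sqrt (by positivity : (0 : ℝ) ≤ (k : ℝ) ^ 2 + (ξ - k * t) ^ 2)
  rw [shearProfile, pp, ell, div_mul_div_comm, ← sq, hsq, mul_comm]

theorem abs_shearProfile_le_one (t : ℝ) : |shearProfile ξ k t| ≤ 1 :=
  abs_div_sqrt_add_sq_le_one (sq_nonneg _) _

theorem hasDerivAt_shearProfile (hk : k ≠ 0) (t : ℝ) :
    HasDerivAt (shearProfile ξ k)
      (-k * ((k : ℝ) ^ 2 / (((k : ℝ) ^ 2 + (ξ - k * t) ^ 2) * √((k : ℝ) ^ 2 + (ξ - k * t) ^ 2))))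
      t := by
  have hw : HasDerivAt (fun u : ℝ => ξ - k * u) (-k) t := by
    simpa using ((hasDerivAt_id t).const_mul (k : ℝ)).const_sub ξ
  have hc : (0 : ℝ) < (k : ℝ) ^ 2 := by positivity
  exact ((hasDerivAt_div_sqrt_add_sq hc (ξ - k * t)).comp t hw).congr_deriv (mul_comm _ _)

end ShearProfile

theorem norm_sq_add_norm_sq_le_of_shear_system {E : Type*} [NormedAddCommGroup E]
    [InnerProductSpace ℝ E] {a ξ : ℝ} {k : ℤ} (ha : 1 / 2 < a) (hk : k ≠ 0) {Z Q : ℝ → E}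
    (hZ : ∀ t, HasDerivAt Z ((1 / 2 * ell ξ k t) • Z t - (a * pp ξ k t) • Q t) t)
    (hQ : ∀ t, HasDerivAt Q ((a * pp ξ k t) • Z t - (1 / 2 * ell ξ k t) • Q t) t) (s t : ℝ) :
    ‖Z t‖ ^ 2 + ‖Q t‖ ^ 2 ≤ stabilityConstant (1 / a) * (‖Z s‖ ^ 2 + ‖Q s‖ ^ 2) := by
  have ha₀ : 0 < a := by linarith
  refine norm_sq_add_norm_sq_le_stabilityConstant_mul (γ := fun u => shearProfile ξ k u / a)
    ?_ hZ hQ (fun u => (hasDerivAt_shearProfile hk u).div_const a) (fun u => ?_) (fun u => ?_)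
    ?_ s t
  · rw [div_lt_iff₀ ha₀]; linarith
  · rw [← shearProfile_mul_pp]; field_simp
  · rw [abs_div, abs_of_pos ha₀]
    exact div_le_div_of_nonneg_right (abs_shearProfile_le_one u) ha₀.le
  · rcases le_total (k : ℝ) 0 with hk₀ | hk₀
    · exact Or.inl fun u => div_nonneg (mul_nonneg (neg_nonneg.2 hk₀) (by positivity)) ha₀.le
    · exact Or.inr fun u =>
        div_nonpos_of_nonpos_of_nonneg (mul_nonpos_of_nonpos_of_nonneg (neg_nonpos.2 hk₀)
          (by positivity)) ha₀.le

/-- Proposition: stability of the homogeneous problem: for `α > 1/4`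
there are constants `0 < c ≤ C`, depending only on `α`, such that for all `ξ ∈ ℝ`,
`k ∈ ℤ` with `k ≠ 0`, every `C¹` solution of
`Z′ = (1/2)ℓ Z − √α p Q`, `Q′ = √α p Z − (1/2)ℓ Q` satisfies
`c(|Z(s)|² + |Q(s)|²) ≤ |Z(t)|² + |Q(t)|² ≤ C(|Z(s)|² + |Q(s)|²)` for all `s, t ∈ ℝ`. -/
theorem statement11 (α : ℝ) (hα : 1 / 4 < α) :
    ∃ c C : ℝ, 0 < c ∧ c ≤ C ∧
      ∀ (ξ : ℝ) (k : ℤ), k ≠ 0 →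
      ∀ Z Q : ℝ → ℂ,
        (∀ t : ℝ, HasDerivAt Z
          (((1 / 2 * ell ξ k t : ℝ) : ℂ) * Z t -
            ((Real.sqrt α * pp ξ k t : ℝ) : ℂ) * Q t) t) →
        (∀ t : ℝ, HasDerivAt Q
          (((Real.sqrt α * pp ξ k t : ℝ) : ℂ) * Z t -
            ((1 / 2 * ell ξ k t : ℝ) : ℂ) * Q t) t) →
        ∀ s t : ℝ,
          c * (‖Z s‖ ^ 2 + ‖Q s‖ ^ 2) ≤
              ‖Z t‖ ^ 2 + ‖Q t‖ ^ 2 ∧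
            ‖Z t‖ ^ 2 + ‖Q t‖ ^ 2 ≤
              C * (‖Z s‖ ^ 2 + ‖Q s‖ ^ 2) := by
  have ha : 1 / 2 < √α := (lt_sqrt (by norm_num)).2 (by linarith)
  have hC : 1 ≤ stabilityConstant (1 / √α) :=
    one_le_stabilityConstant (by positivity) (by rw [div_lt_iff₀ (by linarith)]; linarith)
  refine ⟨(stabilityConstant (1 / √α))⁻¹, stabilityConstant (1 / √α), by positivity,
    (inv_le_one_of_one_le₀ hC).trans hC, fun ξ k hk Z Q hZ hQ s t => ⟨?_, ?_⟩⟩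
  all_goals simp only [← Complex.real_smul] at hZ hQ
  · rw [inv_mul_le_iff₀ (by positivity)]
    exact norm_sq_add_norm_sq_le_of_shear_system ha hk hZ hQ t s
  · exact norm_sq_add_norm_sq_le_of_shear_system ha hk hZ hQ s t
end
end

section
/- Let b ≥ 100, let f : [−b, b] → [0, ∞) be continuous, and let Z_NR, Z_R : [−b, b] → ℂ be continuously differentiable with |Z_NR′(t)| ≤ f(t)·b^{1/2}·(1+t²)^{−3/4}·|Z_R(t)| and |Z_R′(t)| ≤ f(t)·b^{−1/2}·(1+t²)^{−1/4}·|Z_NR(t)| for all t ∈ [−b, b]. Define E(t) = ((1+t²)^{1/2}/b)·|Z_NR(t)|² + |Z_R(t)|² for t ≤ 0 and E(t) = (1/b)·|Z_NR(t)|² + (1+t²)^{−1/2}·|Z_R(t)|² for t ≥ 0. Then for all T ∈ [−b, b]: E(T) ≤ exp( 2·∫_{−b}^{T} f(s)·(1+s²)^{−1/2} ds )·E(−b). -/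
/-!
On each half of `[-b, b]` the energy is a Grönwall quantity. The weight that varies with `t`,
`√(1+t²)` for `t ≤ 0` and `(1+t²)^{-1/2}` for `t ≥ 0`, is nonincreasing there, so its derivative
only helps, and the coupling terms are absorbed by AM–GM: the left one is
`4 f b^{-1/2} (1+t²)^{-1/4} |Z_NR| |Z_R| ≤ 2 f (1+t²)^{-1/2} E`, the right one the same with
`(1+t²)^{-3/4}`. So `E` has right derivative at most `2 f (1+t²)^{-1/2} E` everywhere on
`[-b, b)`, the two formulas agree at `t = 0` so `E` is continuous, and Grönwall's inequality for
right derivatives (`exp (-∫ g) * E` is nonincreasing) concludes.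
-/

open Real Set MeasureTheory intervalIntegral

noncomputable section

/-- The piecewise weighted energy of the two-mode resonance model:
`E(t) = ((1+t²)^{1/2}/b)|Z_NR|² + |Z_R|²` for `t ≤ 0` and
`E(t) = (1/b)|Z_NR|² + (1+t²)^{−1/2}|Z_R|²` for `t ≥ 0`. -/
def resEnergy (b : ℝ) (ZNR ZR : ℝ → ℂ) (t : ℝ) : ℝ :=
  if t ≤ 0 then
    (Real.sqrt (1 + t ^ 2) / b) * ‖ZNR t‖ ^ 2 + ‖ZR t‖ ^ 2
  else
    (1 / b) * ‖ZNR t‖ ^ 2 + ‖ZR t‖ ^ 2 / Real.sqrt (1 + t ^ 2)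

open Topology Filter

theorem le_exp_integral_mul_of_hasDerivWithinAt_Ici {a c : ℝ} {g E : ℝ → ℝ}
    (hg : ContinuousOn g (Icc a c)) (hE : ContinuousOn E (Icc a c))
    (hE' : ∀ t ∈ Ico a c, ∃ E', HasDerivWithinAt E E' (Ici t) t ∧ E' ≤ g t * E t) :
    ∀ T ∈ Icc a c, E T ≤ exp (∫ s in a..T, g s) * E a := by
  intro T hT
  set I : ℝ → ℝ := fun t => ∫ s in a..t, g s
  have hac : a ≤ c := hT.1.trans hT.2
  have hI : ContinuousOn I (Icc a c) := by
    have := continuousOn_primitive_interval (μ := volume) (f := g) (a := a) (b := c)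
    rw [uIcc_of_le hac] at this
    exact this hg.integrableOn_Icc
  have hI' : ∀ t ∈ Ico a c, HasDerivWithinAt I (g t) (Ici t) t := by
    intro t ht
    have hmem : Icc a c ∈ 𝓝[>] t := Icc_mem_nhdsGT_of_mem ht
    refine integral_hasDerivWithinAt_right ?_ ?_
      ((hg t (Ico_subset_Icc_self ht)).mono_of_mem_nhdsWithin hmem)
    · exact (hg.mono (uIcc_subset_Icc (left_mem_Icc.2 hac)
        (Ico_subset_Icc_self ht))).intervalIntegrable
    · exact (hg.stronglyMeasurableAtFilter_nhdsWithin measurableSet_Icc t).filter_mono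
        (nhdsWithin_le_of_mem hmem)
  have hmono : ∀ t ∈ Icc a c, exp (-I t) * E t ≤ E a := by
    choose! E' hE'deriv hE'le using hE'
    refine image_le_of_deriv_right_le_deriv_boundary (B := fun _ => E a) (B' := 0)
      (f := fun t => exp (-I t) * E t)
      ((continuous_exp.comp_continuousOn hI.neg).mul hE)
      (fun t ht => ((hI' t ht).neg.exp).mul (hE'deriv t ht)) (by simp [I]) continuousOn_const
      (fun _ _ => hasDerivWithinAt_const _ _ _) fun t ht => ?_
    calc _ = exp (-I t) * (E' t - g t * E t) := by simp only [Pi.neg_apply]; ring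
      _ ≤ 0 := mul_nonpos_of_nonneg_of_nonpos (exp_pos _).le (sub_nonpos.2 (hE'le t ht))
  calc E T = exp (I T) * (exp (-I T) * E T) := by rw [← mul_assoc, ← exp_add]; simp
    _ ≤ exp (I T) * E a := mul_le_mul_of_nonneg_left (hmono T hT) (exp_pos _).le

lemma pow_rpow_eq_zpow {x : ℝ} (hx : 0 < x) (n : ℕ) {r : ℝ} {k : ℤ} (h : n * r = k) :
    (x ^ n) ^ r = x ^ k := by
  rw [← Real.rpow_natCast, ← Real.rpow_mul hx.le, h, Real.rpow_intCast]

lemma exists_sq_and_pow_four {b u : ℝ} (hb : 0 < b) (hu : 0 < u) :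
    ∃ β v : ℝ, 0 < β ∧ 0 < v ∧ b = β ^ 2 ∧ u = v ^ 4 := by
  refine ⟨√b, u ^ (1 / 4 : ℝ), sqrt_pos.2 hb, by positivity, (sq_sqrt hb.le).symm, ?_⟩
  rw [← Real.rpow_natCast, ← Real.rpow_mul hu.le]; norm_num

lemma amgm_left_energy {b u F N R : ℝ} (hb : 0 < b) (hu : 0 < u) (hF : 0 ≤ F) :
    √u / b * (2 * N * (F * b ^ ((1 : ℝ) / 2) * u ^ (-(3 / 4) : ℝ) * R))
      + 2 * R * (F * b ^ (-(1 : ℝ) / 2) * u ^ (-(1 / 4) : ℝ) * N)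
      ≤ 2 * (F * u ^ (-(1 / 2) : ℝ)) * (√u / b * N ^ 2 + R ^ 2) := by
  obtain ⟨β, v, hβ, hv, rfl, rfl⟩ := exists_sq_and_pow_four hb hu
  rw [pow_rpow_eq_zpow hβ 2 (k := 1) (by norm_num), pow_rpow_eq_zpow hβ 2 (k := -1) (by norm_num),
    pow_rpow_eq_zpow hv 4 (k := -3) (by norm_num), pow_rpow_eq_zpow hv 4 (k := -1) (by norm_num),
    pow_rpow_eq_zpow hv 4 (k := -2) (by norm_num),
    show v ^ 4 = (v ^ 2) ^ 2 by ring, sqrt_sq (by positivity)]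
  simp only [zpow_neg, zpow_ofNat]
  field_simp
  nlinarith [sq_nonneg (N * v - R * β), mul_nonneg hF (mul_nonneg hβ.le hv.le)]

lemma amgm_right_energy {b u F N R : ℝ} (hb : 0 < b) (hu : 0 < u) (hF : 0 ≤ F) :
    1 / b * (2 * N * (F * b ^ ((1 : ℝ) / 2) * u ^ (-(3 / 4) : ℝ) * R))
      + 2 * R * (F * b ^ (-(1 : ℝ) / 2) * u ^ (-(1 / 4) : ℝ) * N) / √u
      ≤ 2 * (F * u ^ (-(1 / 2) : ℝ)) * (1 / b * N ^ 2 + R ^ 2 / √u) := by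
  obtain ⟨β, v, hβ, hv, rfl, rfl⟩ := exists_sq_and_pow_four hb hu
  rw [pow_rpow_eq_zpow hβ 2 (k := 1) (by norm_num), pow_rpow_eq_zpow hβ 2 (k := -1) (by norm_num),
    pow_rpow_eq_zpow hv 4 (k := -3) (by norm_num), pow_rpow_eq_zpow hv 4 (k := -1) (by norm_num),
    pow_rpow_eq_zpow hv 4 (k := -2) (by norm_num),
    show v ^ 4 = (v ^ 2) ^ 2 by ring, sqrt_sq (by positivity)]
  simp only [zpow_neg, zpow_ofNat]
  field_simp
  nlinarith [sq_nonneg (N * v - R * β), mul_nonneg hF (mul_nonneg hβ.le hv.le)]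

lemma two_inner_le_of_norm_le {V : Type*} [NormedAddCommGroup V] [InnerProductSpace ℝ V]
    (x : V) {y : V} {B : ℝ} (h : ‖y‖ ≤ B) : 2 * inner ℝ x y ≤ 2 * ‖x‖ * B := by
  nlinarith [real_inner_le_norm x y, norm_nonneg x]

lemma hasDerivAt_sqrt_one_add_sq (t : ℝ) :
    HasDerivAt (fun s => √(1 + s ^ 2)) (t / √(1 + t ^ 2)) t := by
  convert ((hasDerivAt_pow 2 t).const_add 1).sqrt
    (by positivity : (0 : ℝ) < 1 + t ^ 2).ne' using 1
  field_simp
  ring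

section Branches

variable {V : Type*} [NormedAddCommGroup V] [InnerProductSpace ℝ V]
  {b F t : ℝ} {s : Set ℝ} {X Y : ℝ → V} {X' Y' : V}

lemma exists_hasDerivWithinAt_left_energy_le (hb : 0 < b) (hF : 0 ≤ F) (ht : t ≤ 0)
    (hX : HasDerivWithinAt X X' s t) (hY : HasDerivWithinAt Y Y' s t)
    (hX' : ‖X'‖ ≤ F * b ^ ((1 : ℝ) / 2) * (1 + t ^ 2) ^ (-(3 / 4) : ℝ) * ‖Y t‖)
    (hY' : ‖Y'‖ ≤ F * b ^ (-(1 : ℝ) / 2) * (1 + t ^ 2) ^ (-(1 / 4) : ℝ) * ‖X t‖) :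
    ∃ E', HasDerivWithinAt (fun t => √(1 + t ^ 2) / b * ‖X t‖ ^ 2 + ‖Y t‖ ^ 2) E' s t ∧
      E' ≤ 2 * (F * (1 + t ^ 2) ^ (-(1 / 2) : ℝ)) *
        (√(1 + t ^ 2) / b * ‖X t‖ ^ 2 + ‖Y t‖ ^ 2) := by
  refine ⟨_, (((hasDerivAt_sqrt_one_add_sq t).hasDerivWithinAt.div_const b).mul
    hX.norm_sq).add hY.norm_sq, ?_⟩
  have hweight : t / √(1 + t ^ 2) / b * ‖X t‖ ^ 2 ≤ 0 :=
    mul_nonpos_of_nonpos_of_nonneg (div_nonpos_of_nonpos_of_nonneg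
      (div_nonpos_of_nonpos_of_nonneg ht (sqrt_nonneg _)) hb.le) (sq_nonneg _)
  have hXterm := mul_le_mul_of_nonneg_left (two_inner_le_of_norm_le (X t) hX')
    (by positivity : 0 ≤ √(1 + t ^ 2) / b)
  have hYterm := two_inner_le_of_norm_le (Y t) hY'
  refine le_trans ?_ (amgm_left_energy hb (by positivity) hF)
  linarith

lemma exists_hasDerivWithinAt_right_energy_le (hb : 0 < b) (hF : 0 ≤ F) (ht : 0 ≤ t)
    (hX : HasDerivWithinAt X X' s t) (hY : HasDerivWithinAt Y Y' s t)
    (hX' : ‖X'‖ ≤ F * b ^ ((1 : ℝ) / 2) * (1 + t ^ 2) ^ (-(3 / 4) : ℝ) * ‖Y t‖)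
    (hY' : ‖Y'‖ ≤ F * b ^ (-(1 : ℝ) / 2) * (1 + t ^ 2) ^ (-(1 / 4) : ℝ) * ‖X t‖) :
    ∃ E', HasDerivWithinAt (fun t => 1 / b * ‖X t‖ ^ 2 + ‖Y t‖ ^ 2 / √(1 + t ^ 2)) E' s t ∧
      E' ≤ 2 * (F * (1 + t ^ 2) ^ (-(1 / 2) : ℝ)) *
        (1 / b * ‖X t‖ ^ 2 + ‖Y t‖ ^ 2 / √(1 + t ^ 2)) := by
  have hw : 0 < √(1 + t ^ 2) := by positivity
  refine ⟨_, (hX.norm_sq.const_mul (1 / b)).add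
    (hY.norm_sq.div (hasDerivAt_sqrt_one_add_sq t).hasDerivWithinAt hw.ne'), ?_⟩
  have hXterm := mul_le_mul_of_nonneg_left (two_inner_le_of_norm_le (X t) hX')
    (by positivity : 0 ≤ 1 / b)
  have hYterm : (2 * inner ℝ (Y t) Y' * √(1 + t ^ 2) - ‖Y t‖ ^ 2 * (t / √(1 + t ^ 2))) /
      √(1 + t ^ 2) ^ 2 ≤ 2 * inner ℝ (Y t) Y' / √(1 + t ^ 2) := by
    rw [div_le_div_iff₀ (by positivity) hw]
    nlinarith [mul_nonneg (sq_nonneg ‖Y t‖) (div_nonneg ht hw.le)]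
  have hYterm' := div_le_div_of_nonneg_right (two_inner_le_of_norm_le (Y t) hY') hw.le
  refine le_trans ?_ (amgm_right_energy hb (by positivity) hF)
  linarith

end Branches

section ResEnergy

variable {b : ℝ} {ZNR ZR : ℝ → ℂ}

lemma resEnergy_of_nonpos {t : ℝ} (ht : t ≤ 0) :
    resEnergy b ZNR ZR t = √(1 + t ^ 2) / b * ‖ZNR t‖ ^ 2 + ‖ZR t‖ ^ 2 :=
  if_pos ht

lemma resEnergy_of_nonneg {t : ℝ} (ht : 0 ≤ t) :
    resEnergy b ZNR ZR t = 1 / b * ‖ZNR t‖ ^ 2 + ‖ZR t‖ ^ 2 / √(1 + t ^ 2) := by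
  rcases ht.eq_or_lt with rfl | ht
  · simp [resEnergy]
  · exact if_neg ht.not_ge

lemma continuousOn_resEnergy {s : Set ℝ} (hNR : ContinuousOn ZNR s) (hR : ContinuousOn ZR s) :
    ContinuousOn (resEnergy b ZNR ZR) s := by
  have hsqrt : Continuous fun t : ℝ => √(1 + t ^ 2) := by fun_prop
  refine ContinuousOn.if ?_ ?_ ?_
  · intro t ht
    rw [show {t : ℝ | t ≤ 0} = Iic 0 from rfl, frontier_Iic] at ht
    obtain rfl : t = 0 := ht.2
    simp
  · exact (((hsqrt.div_const b).continuousOn.mul (hNR.norm.pow 2)).add (hR.norm.pow 2)).mono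
      inter_subset_left
  · exact ((continuousOn_const.mul (hNR.norm.pow 2)).add
      ((hR.norm.pow 2).div hsqrt.continuousOn fun t _ => by positivity)).mono inter_subset_left

lemma exists_hasDerivWithinAt_resEnergy_le {t F : ℝ} {ZNR' ZR' : ℂ} (hb : 0 < b) (hF : 0 ≤ F)
    (hNR : HasDerivWithinAt ZNR ZNR' (Ici t) t) (hR : HasDerivWithinAt ZR ZR' (Ici t) t)
    (hNR' : ‖ZNR'‖ ≤ F * b ^ ((1 : ℝ) / 2) * (1 + t ^ 2) ^ (-(3 / 4) : ℝ) * ‖ZR t‖)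
    (hR' : ‖ZR'‖ ≤ F * b ^ (-(1 : ℝ) / 2) * (1 + t ^ 2) ^ (-(1 / 4) : ℝ) * ‖ZNR t‖) :
    ∃ E', HasDerivWithinAt (resEnergy b ZNR ZR) E' (Ici t) t ∧
      E' ≤ 2 * (F * (1 + t ^ 2) ^ (-(1 / 2) : ℝ)) * resEnergy b ZNR ZR t := by
  rcases lt_or_ge t 0 with ht | ht
  · obtain ⟨E', hE', hle⟩ :=
      exists_hasDerivWithinAt_left_energy_le hb hF ht.le hNR hR hNR' hR'
    have hEq : resEnergy b ZNR ZR =ᶠ[𝓝[Ici t] t]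
        fun t => √(1 + t ^ 2) / b * ‖ZNR t‖ ^ 2 + ‖ZR t‖ ^ 2 :=
      eventually_nhdsWithin_of_eventually_nhds <|
        eventually_of_mem (Iio_mem_nhds ht) fun s hs => resEnergy_of_nonpos (le_of_lt hs)
    rw [resEnergy_of_nonpos ht.le]
    exact ⟨E', hE'.congr_of_eventuallyEq hEq (resEnergy_of_nonpos ht.le), hle⟩
  · obtain ⟨E', hE', hle⟩ := exists_hasDerivWithinAt_right_energy_le hb hF ht hNR hR hNR' hR'
    rw [resEnergy_of_nonneg ht]
    exact ⟨E', hE'.congr (fun s hs => resEnergy_of_nonneg (ht.trans hs))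
      (resEnergy_of_nonneg ht), hle⟩

end ResEnergy

theorem statement17_general (b : ℝ) (hb : 100 ≤ b) (f : ℝ → ℝ)
    (hf_cont : ContinuousOn f (Icc (-b) b))
    (hf_nonneg : ∀ t ∈ Icc (-b) b, 0 ≤ f t)
    (ZNR ZR ZNR' ZR' : ℝ → ℂ)
    (hZNR : ∀ t ∈ Icc (-b) b, HasDerivWithinAt ZNR (ZNR' t) (Icc (-b) b) t)
    (hZR : ∀ t ∈ Icc (-b) b, HasDerivWithinAt ZR (ZR' t) (Icc (-b) b) t)
    (hineqNR : ∀ t ∈ Icc (-b) b, ‖ZNR' t‖ ≤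
      f t * b ^ ((1 : ℝ) / 2) * (1 + t ^ 2) ^ (-(3 / 4) : ℝ) * ‖ZR t‖)
    (hineqR : ∀ t ∈ Icc (-b) b, ‖ZR' t‖ ≤
      f t * b ^ (-(1 : ℝ) / 2) * (1 + t ^ 2) ^ (-(1 / 4) : ℝ) * ‖ZNR t‖) :
    ∀ T ∈ Icc (-b) b,
      resEnergy b ZNR ZR T ≤
        Real.exp (2 * ∫ s in (-b)..T, f s * (1 + s ^ 2) ^ (-(1 / 2) : ℝ)) *
          resEnergy b ZNR ZR (-b) := by
  intro T hT
  have hb0 : 0 < b := by linarith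
  have hg : ContinuousOn (fun s => 2 * (f s * (1 + s ^ 2) ^ (-(1 / 2) : ℝ))) (Icc (-b) b) :=
    continuousOn_const.mul (hf_cont.mul
      (Continuous.rpow_const (by fun_prop) fun s => Or.inl (by positivity)).continuousOn)
  have hE : ContinuousOn (resEnergy b ZNR ZR) (Icc (-b) b) :=
    continuousOn_resEnergy (fun t ht => (hZNR t ht).continuousWithinAt)
      (fun t ht => (hZR t ht).continuousWithinAt)
  have hE' (t : ℝ) (ht : t ∈ Ico (-b) b) :
      ∃ E', HasDerivWithinAt (resEnergy b ZNR ZR) E' (Ici t) t ∧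
        E' ≤ 2 * (f t * (1 + t ^ 2) ^ (-(1 / 2) : ℝ)) * resEnergy b ZNR ZR t :=
    have ht' := Ico_subset_Icc_self ht
    exists_hasDerivWithinAt_resEnergy_le hb0 (hf_nonneg t ht')
      ((hZNR t ht').mono_of_mem_nhdsWithin (Icc_mem_nhdsGE_of_mem ht))
      ((hZR t ht').mono_of_mem_nhdsWithin (Icc_mem_nhdsGE_of_mem ht))
      (hineqNR t ht') (hineqR t ht')
  simpa only [intervalIntegral.integral_const_mul] using
    le_exp_integral_mul_of_hasDerivWithinAt_Ici hg hE hE' T hT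

/-- energy estimate for the two-mode resonance model: for `b ≥ 100`,
`f ≥ 0` continuous and `Z_NR, Z_R` satisfying the coupled differential inequalities on
`[−b,b]`, the energy satisfies
`E(T) ≤ exp(2 ∫_{−b}^T f(s)(1+s²)^{−1/2} ds) E(−b)` for all `T ∈ [−b,b]`. -/
theorem statement17 (b : ℝ) (hb : 100 ≤ b) (f : ℝ → ℝ)
    (hf_cont : ContinuousOn f (Icc (-b) b))
    (hf_nonneg : ∀ t ∈ Icc (-b) b, 0 ≤ f t)
    (ZNR ZR ZNR' ZR' : ℝ → ℂ)
    (hZNR : ∀ t ∈ Icc (-b) b, HasDerivWithinAt ZNR (ZNR' t) (Icc (-b) b) t)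
    (hZR : ∀ t ∈ Icc (-b) b, HasDerivWithinAt ZR (ZR' t) (Icc (-b) b) t)
    (hZNR'c : ContinuousOn ZNR' (Icc (-b) b))
    (hZR'c : ContinuousOn ZR' (Icc (-b) b))
    (hineqNR : ∀ t ∈ Icc (-b) b, ‖ZNR' t‖ ≤
      f t * b ^ ((1 : ℝ) / 2) * (1 + t ^ 2) ^ (-(3 / 4) : ℝ) * ‖ZR t‖)
    (hineqR : ∀ t ∈ Icc (-b) b, ‖ZR' t‖ ≤
      f t * b ^ (-(1 : ℝ) / 2) * (1 + t ^ 2) ^ (-(1 / 4) : ℝ) * ‖ZNR t‖) :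
    ∀ T ∈ Icc (-b) b,
      resEnergy b ZNR ZR T ≤
        Real.exp (2 * ∫ s in (-b)..T, f s * (1 + s ^ 2) ^ (-(1 / 2) : ℝ)) *
          resEnergy b ZNR ZR (-b) :=
  statement17_general b hb f hf_cont hf_nonneg ZNR ZR ZNR' ZR' hZNR hZR hineqNR hineqR

end
end
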